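/- arXiv:1403.0909 — 2 statements merged into one kernel-verified Lean document; each statement's English description precedes it below -/
import Mathlib

section
/- Let Γ act on X. Suppose that every function H : X → ℝ of the form H(x) = Σᵢ₌₁ⁿ (hᵢ(x) − hᵢ(γᵢ⁻¹x)), with h₁,…,hₙ ∈ ℓ∞(X) and γ₁,…,γₙ ∈ Γ, satisfies sup_{x∈X} H(x) ≥ 0. Then there exists a Γ-invariant mean on ℓ∞(X) (i.e., the action of Γ on X is amenable). -/
/-!
Let `S ⊆ ℓ∞(X)` be the span of the differences `f - γ·f`. Dixmier's condition says exactly that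
`sup d ≥ 0` for every `d ∈ S`, i.e. the zero functional on `S` is dominated by the sublinear
functional `f ↦ sup f`. A Hahn–Banach extension `m ≤ sup` of it vanishes on `S`, hence is
invariant, and `m ≤ sup` alone forces `m ≥ 0` on nonnegative functions and `m 1 = 1`.
-/

open BoundedContinuousFunction

/-- The left-regular lregTranslate of a bounded function: `(γ · f)(x) = f(γ⁻¹ • x)`. -/
noncomputable def lregTranslate {Γ X : Type*} [Group Γ] [MulAction Γ X]
    [TopologicalSpace X] [DiscreteTopology X] (γ : Γ) (f : X →ᵇ ℝ) : X →ᵇ ℝ :=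
  f.compContinuous ⟨fun x => γ⁻¹ • x, continuous_of_discreteTopology⟩

/-- A `Γ`-invariant mean on `ℓ∞(X)`: a positive linear functional with `m 1 = 1`
invariant under the left-regular action. -/
structure InvariantMean (Γ X : Type*) [Group Γ] [MulAction Γ X]
    [TopologicalSpace X] [DiscreteTopology X] where
  toFun : (X →ᵇ ℝ) →ₗ[ℝ] ℝ
  nonneg : ∀ f : X →ᵇ ℝ, (∀ x, 0 ≤ f x) → 0 ≤ toFun f
  map_one : toFun 1 = 1
  invariant : ∀ (γ : Γ) (f : X →ᵇ ℝ), toFun (lregTranslate γ f) = toFun f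

namespace BoundedContinuousFunction

variable {X : Type*} [TopologicalSpace X]

theorem iSup_add_le [Nonempty X] (f g : X →ᵇ ℝ) :
    ⨆ x, (f + g) x ≤ (⨆ x, f x) + ⨆ x, g x :=
  ciSup_le fun x => add_le_add (le_ciSup f.isBounded_range.bddAbove x)
    (le_ciSup g.isBounded_range.bddAbove x)

theorem iSup_smul_of_nonneg {c : ℝ} (hc : 0 ≤ c) (f : X →ᵇ ℝ) :
    ⨆ x, (c • f) x = c * ⨆ x, f x :=
  (Real.mul_iSup_of_nonneg hc _).symm

theorem exists_linear_eq_zero_le_iSup [Nonempty X] (S : Submodule ℝ (X →ᵇ ℝ))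
    (hS : ∀ d ∈ S, 0 ≤ ⨆ x, d x) :
    ∃ m : (X →ᵇ ℝ) →ₗ[ℝ] ℝ, (∀ d ∈ S, m d = 0) ∧ ∀ f, m f ≤ ⨆ x, f x := by
  obtain ⟨m, hm_eq, hm_le⟩ := exists_extension_of_le_sublinear ⟨S, 0⟩ (fun f => ⨆ x, f x)
    (fun c hc => iSup_smul_of_nonneg hc.le) iSup_add_le (fun d => hS d d.2)
  exact ⟨m, fun d hd => hm_eq ⟨d, hd⟩, hm_le⟩

theorem nonneg_of_le_iSup (m : (X →ᵇ ℝ) →ₗ[ℝ] ℝ) (hm : ∀ f, m f ≤ ⨆ x, f x) {f : X →ᵇ ℝ}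
    (hf : ∀ x, 0 ≤ f x) : 0 ≤ m f := by
  have : m (-f) ≤ 0 := (hm (-f)).trans (Real.iSup_nonpos fun x => by simpa using hf x)
  simpa using this

theorem map_one_of_le_iSup [Nonempty X] (m : (X →ᵇ ℝ) →ₗ[ℝ] ℝ) (hm : ∀ f, m f ≤ ⨆ x, f x) :
    m 1 = 1 := by
  have h₁ : m 1 ≤ 1 := by simpa using hm 1
  have h₂ : m (-1) ≤ -1 := by simpa using hm (-1)
  rw [map_neg] at h₂
  linarith

end BoundedContinuousFunction

section Dixmier

variable (Γ X : Type*) [Group Γ] [MulAction Γ X] [TopologicalSpace X] [DiscreteTopology X]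

def dixmierSubmodule : Submodule ℝ (X →ᵇ ℝ) :=
  Submodule.span ℝ (Set.range fun p : Γ × (X →ᵇ ℝ) => p.2 - lregTranslate p.1 p.2)

variable {Γ X}

theorem sub_lregTranslate_mem_dixmierSubmodule (γ : Γ) (f : X →ᵇ ℝ) :
    f - lregTranslate γ f ∈ dixmierSubmodule Γ X :=
  Submodule.subset_span ⟨(γ, f), rfl⟩

theorem iSup_nonneg_of_mem_dixmierSubmodule
    (hyp : ∀ (n : ℕ) (h : Fin n → (X →ᵇ ℝ)) (g : Fin n → Γ),
      0 ≤ ⨆ x : X, ∑ i, (h i x - h i ((g i)⁻¹ • x)))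
    {d : X →ᵇ ℝ} (hd : d ∈ dixmierSubmodule Γ X) : 0 ≤ ⨆ x, d x := by
  obtain ⟨n, c, v, rfl⟩ := Submodule.mem_span_set'.mp hd
  choose p hp using fun i => (v i).2
  convert hyp n (fun i => c i • (p i).2) (fun i => (p i).1) using 3 with x
  simp [← hp, lregTranslate, mul_sub]

end Dixmier

theorem invariant_mean_of_dixmier_general
    {Γ X : Type*} [Group Γ] [MulAction Γ X] [Nonempty X]
    [TopologicalSpace X] [DiscreteTopology X]
    (hyp : ∀ (n : ℕ) (h : Fin n → (X →ᵇ ℝ)) (g : Fin n → Γ),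
      0 ≤ ⨆ x : X, ∑ i, (h i x - h i ((g i)⁻¹ • x))) :
    Nonempty (InvariantMean Γ X) := by
  obtain ⟨m, hm_zero, hm_le⟩ := exists_linear_eq_zero_le_iSup (dixmierSubmodule Γ X)
    fun d => iSup_nonneg_of_mem_dixmierSubmodule hyp
  refine ⟨⟨m, fun f => nonneg_of_le_iSup m hm_le, map_one_of_le_iSup m hm_le, fun γ f => ?_⟩⟩
  have := hm_zero _ (sub_lregTranslate_mem_dixmierSubmodule γ f)
  rwa [map_sub, sub_eq_zero, eq_comm] at this

/-- Dixmier's condition: if every `H(x) = Σᵢ (hᵢ(x) − hᵢ(γᵢ⁻¹x))` has `sup_x H(x) ≥ 0`,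
then there is a `Γ`-invariant mean on `ℓ∞(X)`. -/
theorem invariant_mean_of_dixmier
    {Γ X : Type*} [Group Γ] [Countable Γ] [MulAction Γ X] [Nonempty X]
    [TopologicalSpace X] [DiscreteTopology X]
    (hyp : ∀ (n : ℕ) (h : Fin n → (X →ᵇ ℝ)) (g : Fin n → Γ),
      0 ≤ ⨆ x : X, ∑ i, (h i x - h i ((g i)⁻¹ • x))) :
    Nonempty (InvariantMean Γ X) :=
  invariant_mean_of_dixmier_general hyp
end

section
/- Let Γ act on X, and suppose X admits a paradoxical decomposition: disjoint subsets A₁,…,A_s, B₁,…,B_t, C of X and elements γ₁,…,γ_s, η₁,…,η_t ∈ Γ with γ₁ = η₁ = e, such that X = (⊔ᵢAᵢ) ⊔ (⊔ⱼBⱼ) ⊔ C = ⊔ᵢ γᵢAᵢ = ⊔ⱼ ηⱼBⱼ. Define H(x) = (1/(s+t−2))·[Σᵢ₌₂ˢ (𝟙_{Aᵢ}(x) − 𝟙_{Aᵢ}(γᵢ⁻¹x)) + Σⱼ₌₂ᵗ (𝟙_{Bⱼ}(x) − 𝟙_{Bⱼ}(ηⱼ⁻¹x))]. Then sup_{x∈X}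 H(x) ≤ −1/(s+t−2). -/
/-!
Since `γ₁ = η₁ = e`, the first terms of both sums vanish, so the bracket in `H(x)` equals
`Σᵢ 𝟙_{Aᵢ}(x) + Σⱼ 𝟙_{Bⱼ}(x) − Σᵢ 𝟙_{γᵢAᵢ}(x) − Σⱼ 𝟙_{ηⱼBⱼ}(x)`. The translates `γᵢAᵢ` and
`ηⱼBⱼ` each partition `X`, so the last two sums are `1` each, while the `Aᵢ` and `Bⱼ` are pairwise
disjoint, so the first two add up to at most `1`. Hence the bracket is at most `−1`.
-/

open scoped Pointwise
open Function Set

section Indicator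

variable {ι X : Type*} [Fintype ι]

theorem sum_indicator_apply_eq_indicator_iUnion {M : Type*} [AddCommMonoid M] {S : ι → Set X}
    (h : Pairwise (Disjoint on S)) (f : X → M) (x : X) :
    ∑ i, (S i).indicator f x = (⋃ i, S i).indicator f x := by
  simpa using (Finset.indicator_biUnion_apply Finset.univ S (fun i _ j _ hij => h hij) x).symm

theorem indicator_one_apply_le_one (S : Set X) (x : X) : S.indicator (1 : X → ℝ) x ≤ 1 :=
  indicator_apply_le' (fun _ => le_rfl) (fun _ => zero_le_one)

theorem sum_indicator_one_apply_eq_one {S : ι → Set X} (h : Pairwise (Disjoint on S))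
    (hS : ⋃ i, S i = univ) (x : X) : ∑ i, (S i).indicator (1 : X → ℝ) x = 1 := by
  rw [sum_indicator_apply_eq_indicator_iUnion h, hS, indicator_univ, Pi.one_apply]

theorem sum_indicator_one_apply_add_sum_le_one {κ : Type*} [Fintype κ] {A : ι → Set X}
    {B : κ → Set X} (hA : Pairwise (Disjoint on A)) (hB : Pairwise (Disjoint on B))
    (hAB : ∀ i j, Disjoint (A i) (B j)) (x : X) :
    ∑ i, (A i).indicator (1 : X → ℝ) x + ∑ j, (B j).indicator (1 : X → ℝ) x ≤ 1 := by
  have hdisj : Disjoint (⋃ i, A i) (⋃ j, B j) :=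
    disjoint_iUnion_left.2 fun i => disjoint_iUnion_right.2 (hAB i)
  rw [sum_indicator_apply_eq_indicator_iUnion hA, sum_indicator_apply_eq_indicator_iUnion hB,
    ← congrFun (indicator_union_of_disjoint hdisj 1) x]
  exact indicator_one_apply_le_one _ x

end Indicator

section Translate

variable {Γ X : Type*} [Group Γ] [MulAction Γ X]

theorem indicator_one_apply_inv_smul {M : Type*} [Zero M] [One M] (A : Set X) (g : Γ) (x : X) :
    A.indicator (1 : X → M) (g⁻¹ • x) = (g • A).indicator 1 x := by
  by_cases h : g⁻¹ • x ∈ A <;> simp [h, mem_smul_set_iff_inv_smul_mem]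

theorem sum_erase_indicator_sub_indicator_inv_smul {ι : Type*} [Fintype ι] [DecidableEq ι]
    {A : ι → Set X} {γ : ι → Γ} {i₀ : ι} (h₀ : γ i₀ = 1)
    (hdisj : Pairwise (Disjoint on fun i => γ i • A i)) (hcover : ⋃ i, γ i • A i = univ)
    (x : X) :
    ∑ i ∈ Finset.univ.erase i₀,
        ((A i).indicator (1 : X → ℝ) x - (A i).indicator 1 ((γ i)⁻¹ • x)) =
      ∑ i, (A i).indicator (1 : X → ℝ) x - 1 := by
  rw [Finset.sum_erase _ (by rw [h₀, inv_one, one_smul, sub_self]), Finset.sum_sub_distrib]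
  simp only [indicator_one_apply_inv_smul]
  rw [sum_indicator_one_apply_eq_one hdisj hcover]

end Translate

theorem paradoxical_gives_negative_H_general {Γ X : Type*} [Group Γ] [MulAction Γ X]
    (s t : ℕ) (hs : 0 < s) (ht : 0 < t)
    (A : Fin s → Set X) (B : Fin t → Set X)
    (γ : Fin s → Γ) (η : Fin t → Γ)
    (hγ1 : γ ⟨0, hs⟩ = 1) (hη1 : η ⟨0, ht⟩ = 1)
    (hAdisj : Pairwise (Function.onFun Disjoint A))
    (hBdisj : Pairwise (Function.onFun Disjoint B))
    (hABdisj : ∀ i j, Disjoint (A i) (B j))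
    (hAcover : (⋃ i, γ i • A i) = Set.univ)
    (hAcover_disj : Pairwise (Function.onFun Disjoint fun i => γ i • A i))
    (hBcover : (⋃ j, η j • B j) = Set.univ)
    (hBcover_disj : Pairwise (Function.onFun Disjoint fun j => η j • B j)) :
    ∀ x : X,
      (1 / ((s : ℝ) + t - 2)) *
        ((∑ i ∈ Finset.univ.erase ⟨0, hs⟩,
            ((A i).indicator (1 : X → ℝ) x - (A i).indicator (1 : X → ℝ) ((γ i)⁻¹ • x))) +
          ∑ j ∈ Finset.univ.erase ⟨0, ht⟩,
            ((B j).indicator (1 : X → ℝ) x - (B j).indicator (1 : X → ℝ) ((η j)⁻¹ • x)))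
        ≤ -(1 / ((s : ℝ) + t - 2)) := by
  intro x
  rw [sum_erase_indicator_sub_indicator_inv_smul hγ1 hAcover_disj hAcover,
    sum_erase_indicator_sub_indicator_inv_smul hη1 hBcover_disj hBcover]
  have hle := sum_indicator_one_apply_add_sum_le_one hAdisj hBdisj hABdisj x
  have hcoef : 0 ≤ 1 / ((s : ℝ) + t - 2) := by
    have : (1 : ℝ) ≤ s := by exact_mod_cast hs
    have : (1 : ℝ) ≤ t := by exact_mod_cast ht
    exact one_div_nonneg.2 (by linarith)
  nlinarith

/-- From a paradoxical decomposition `X = (⊔ᵢAᵢ) ⊔ (⊔ⱼBⱼ) ⊔ C = ⊔ᵢγᵢAᵢ = ⊔ⱼηⱼBⱼ`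
(with `γ₁ = η₁ = e`), the function
`H(x) = (1/(s+t−2))·[Σᵢ₌₂ˢ(𝟙_{Aᵢ}(x) − 𝟙_{Aᵢ}(γᵢ⁻¹x)) + Σⱼ₌₂ᵗ(𝟙_{Bⱼ}(x) − 𝟙_{Bⱼ}(ηⱼ⁻¹x))]`
satisfies `sup_x H(x) ≤ −1/(s+t−2)`. -/
theorem paradoxical_gives_negative_H {Γ X : Type*} [Group Γ] [MulAction Γ X]
    (s t : ℕ) (hs : 0 < s) (ht : 0 < t)
    (A : Fin s → Set X) (B : Fin t → Set X) (C : Set X)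
    (γ : Fin s → Γ) (η : Fin t → Γ)
    (hγ1 : γ ⟨0, hs⟩ = 1) (hη1 : η ⟨0, ht⟩ = 1)
    (hAdisj : Pairwise (Function.onFun Disjoint A))
    (hBdisj : Pairwise (Function.onFun Disjoint B))
    (hABdisj : ∀ i j, Disjoint (A i) (B j))
    (hACdisj : ∀ i, Disjoint (A i) C)
    (hBCdisj : ∀ j, Disjoint (B j) C)
    (hcover : (⋃ i, A i) ∪ (⋃ j, B j) ∪ C = Set.univ)
    (hAcover : (⋃ i, γ i • A i) = Set.univ)
    (hAcover_disj : Pairwise (Function.onFun Disjoint fun i => γ i • A i))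
    (hBcover : (⋃ j, η j • B j) = Set.univ)
    (hBcover_disj : Pairwise (Function.onFun Disjoint fun j => η j • B j)) :
    ∀ x : X,
      (1 / ((s : ℝ) + t - 2)) *
        ((∑ i ∈ Finset.univ.erase ⟨0, hs⟩,
            ((A i).indicator (1 : X → ℝ) x - (A i).indicator (1 : X → ℝ) ((γ i)⁻¹ • x))) +
          ∑ j ∈ Finset.univ.erase ⟨0, ht⟩,
            ((B j).indicator (1 : X → ℝ) x - (B j).indicator (1 : X → ℝ) ((η j)⁻¹ • x)))
        ≤ -(1 / ((s : ℝ) + t - 2)) :=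
  paradoxical_gives_negative_H_general s t hs ht A B γ η hγ1 hη1 hAdisj hBdisj hABdisj hAcover
    hAcover_disj hBcover hBcover_disj
end
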